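/- Let 1 ≤ q < p < ∞, let a, b ≥ 0 with a + b > 0, and let C₁, C₂ > 0. If a^(p/q) ≤ C₁·X₁ and b^(p/q) ≤ C₂·X₂ for some X₁, X₂ ≥ 0, then (a+b)^(p/q) ≤ (C₁^(q/(p-q)) + C₂^(q/(p-q)))^((p-q)/q) · (X₁ + X₂). -/

import Mathlib

lemma aux_two_weight (w₁ w₂ z₁ z₂ : ℝ) (hw₁ : 0 ≤ w₁) (hw₂ : 0 ≤ w₂)
    (hz₁ : 0 ≤ z₁) (hz₂ : 0 ≤ z₂) (hw : w₁ + w₂ = 1) {r : ℝ} (hr : 1 ≤ r) :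
    (w₁ * z₁ + w₂ * z₂) ^ r ≤ w₁ * z₁ ^ r + w₂ * z₂ ^ r := by
  have := Real.rpow_arith_mean_le_arith_mean_rpow Finset.univ ![w₁, w₂] ![z₁, z₂]
    (by intro i _; fin_cases i <;> simpa) (by simp [Fin.sum_univ_two, hw])
    (by intro i _; fin_cases i <;> simpa) hr
  simpa [Fin.sum_univ_two] using this

theorem stmt_1 (p q a b C₁ C₂ X₁ X₂ : ℝ) (hq : 1 ≤ q) (hpq : q < p)
    (ha : 0 ≤ a) (hb : 0 ≤ b) (hab : 0 < a + b) (hC₁ : 0 < C₁) (hC₂ : 0 < C₂)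
    (hX₁ : 0 ≤ X₁) (hX₂ : 0 ≤ X₂)
    (h₁ : a ^ (p / q) ≤ C₁ * X₁) (h₂ : b ^ (p / q) ≤ C₂ * X₂) :
    (a + b) ^ (p / q) ≤
      (C₁ ^ (q / (p - q)) + C₂ ^ (q / (p - q))) ^ ((p - q) / q) * (X₁ + X₂) := by
  have hq0 : (0:ℝ) < q := lt_of_lt_of_le one_pos hq
  have hpq0 : (0:ℝ) < p - q := by linarith
  set s : ℝ := q / (p - q) with hs
  set r : ℝ := p / q with hrdef
  have hr1 : 1 ≤ r := by
    rw [hrdef, le_div_iff₀ hq0]; linarith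
  have hD₁ : (0:ℝ) < C₁ ^ s := Real.rpow_pos_of_pos hC₁ s
  have hD₂ : (0:ℝ) < C₂ ^ s := Real.rpow_pos_of_pos hC₂ s
  set S : ℝ := C₁ ^ s + C₂ ^ s with hSdef
  have hS : 0 < S := by positivity
  set t : ℝ := C₁ ^ s / S with htdef
  have ht0 : 0 < t := by positivity
  have ht1 : 0 < 1 - t := by
    have : t < 1 := by
      rw [htdef, div_lt_one hS, hSdef]; linarith
    linarith
  have hone : 1 - t = C₂ ^ s / S := by
    field_simp [htdef, hSdef]
    have htS : t * S = C₁ ^ s := by rw [htdef]; field_simp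
    linear_combination -htS + hSdef
  -- key exponent identity : s * (r - 1) = 1
  have hsr : s * (r - 1) = 1 := by
    rw [hs, hrdef]; field_simp
  -- t ^ (r-1) = C₁ / S^(r-1)
  have htr : ∀ C : ℝ, 0 < C → (C ^ s / S) ^ (r - 1) = C / S ^ (r - 1) := by
    intro C hC
    rw [Real.div_rpow (le_of_lt (Real.rpow_pos_of_pos hC s)) hS.le,
      ← Real.rpow_mul hC.le, hsr, Real.rpow_one]
  -- convexity step
  have hkey := aux_two_weight t (1 - t) (a / t) (b / (1 - t)) ht0.le ht1.le
    (by positivity) (by positivity) (by ring) hr1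
  rw [mul_div_cancel₀ _ (ne_of_gt ht0), mul_div_cancel₀ _ (ne_of_gt ht1)] at hkey
  have e1 : t * (a / t) ^ r ≤ S ^ (r - 1) * X₁ := by
    rw [Real.div_rpow ha ht0.le, mul_div_assoc']
    rw [div_le_iff₀ (Real.rpow_pos_of_pos ht0 r)]
    have htpow : t ^ r = t * t ^ (r - 1) := by
      rw [← Real.rpow_one_add' ht0.le (by simp; nlinarith : 1 + (r - 1) ≠ 0)]
      norm_num
    have ht2 : t ^ (r - 1) = C₁ / S ^ (r - 1) := by rw [htdef]; exact htr C₁ hC₁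
    calc t * a ^ r ≤ t * (C₁ * X₁) := by
          apply mul_le_mul_of_nonneg_left _ ht0.le
          rw [hrdef]; exact h₁
      _ = S ^ (r - 1) * X₁ * (t * (C₁ / S ^ (r - 1))) := by
          field_simp
      _ = S ^ (r - 1) * X₁ * t ^ r := by rw [htpow, ht2]
  have e2 : (1 - t) * (b / (1 - t)) ^ r ≤ S ^ (r - 1) * X₂ := by
    rw [Real.div_rpow hb ht1.le, mul_div_assoc']
    rw [div_le_iff₀ (Real.rpow_pos_of_pos ht1 r)]
    have htpow : (1 - t) ^ r = (1 - t) * (1 - t) ^ (r - 1) := by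
      rw [← Real.rpow_one_add' ht1.le (by simp; nlinarith : 1 + (r - 1) ≠ 0)]
      norm_num
    have ht2 : (1 - t) ^ (r - 1) = C₂ / S ^ (r - 1) := by rw [hone]; exact htr C₂ hC₂
    calc (1 - t) * b ^ r ≤ (1 - t) * (C₂ * X₂) := by
          apply mul_le_mul_of_nonneg_left _ ht1.le
          rw [hrdef]; exact h₂
      _ = S ^ (r - 1) * X₂ * ((1 - t) * (C₂ / S ^ (r - 1))) := by
          field_simp
      _ = S ^ (r - 1) * X₂ * (1 - t) ^ r := by rw [htpow, ht2]
  have hfin : (a + b) ^ r ≤ S ^ (r - 1) * (X₁ + X₂) := by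
    calc (a + b) ^ r ≤ t * (a / t) ^ r + (1 - t) * (b / (1 - t)) ^ r := hkey
      _ ≤ S ^ (r - 1) * X₁ + S ^ (r - 1) * X₂ := add_le_add e1 e2
      _ = S ^ (r - 1) * (X₁ + X₂) := by ring
  have hrq : (p - q) / q = r - 1 := by rw [hrdef]; field_simp
  rw [hrq]
  exact hfin
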